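/- Let R be a noetherian commutative ring satisfying (G₀) and (S₂), and let M be a finitely generated torsion R-module such that some regular element r ∈ R is M-regular and char_R(M) = L·R is principal generated by a regular element L. Then for any x ∈ R and m ≥ 1 with r^m·x ∈ char_R(M), one has x ∈ char_R(M); i.e., char_R(M) is saturated with respect to powers of r. -/

import Mathlib

open Module

section Defs
variable (R : Type*) [CommRing R]

/-- The `r`-th exterior bi-dual `⋂^r_R M := (⋀^r_R (M^*))^*`, realized canonically as the
module of alternating `R`-multilinear forms on `r` copies of the dual module `M^*`. -/
abbrev ExtBidual (M : Type*) [AddCommGroup M] [Module R M] (r : ℕ) :=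
  (Module.Dual R M) [⋀^Fin r]→ₗ[R] R

/-- Functoriality of the exterior bi-dual. -/
noncomputable def extBidualMap {M N : Type*} [AddCommGroup M] [Module R M]
    [AddCommGroup N] [Module R N] (r : ℕ) (f : M →ₗ[R] N) :
    ExtBidual R M r →ₗ[R] ExtBidual R N r where
  toFun φ := φ.compLinearMap f.dualMap
  map_add' := by intros; ext; rfl
  map_smul' := by intros; ext; rfl

/-- The canonical identification `⋂^s_R (R^s) = R`, given by evaluation at the
standard dual basis. -/
noncomputable def extEval (s : ℕ) : ExtBidual R (Fin s → R) s →ₗ[R] R where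
  toFun φ := φ (fun i => LinearMap.proj i)
  map_add' := by intros; rfl
  map_smul' := by intros; rfl

/-- The characteristic ideal of `M` computed from a presentation `0 → N → R^s → M → 0`
with kernel `N`: the image of the induced map `⋂^s_R N → ⋂^s_R R^s = R`. -/
noncomputable def charIdealAux (s : ℕ) (N : Submodule R (Fin s → R)) : Ideal R :=
  LinearMap.range ((extEval R s) ∘ₗ (extBidualMap R s N.subtype))

/-- The zeroth Fitting ideal of `M` computed from a presentation `0 → N → R^s → M → 0`
with kernel `N`: the ideal generated by determinants of `s × s` matrices with columns in `N`. -/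
def fittIdealAux (s : ℕ) (N : Submodule R (Fin s → R)) : Ideal R :=
  Ideal.span { x | ∃ v : Fin s → (Fin s → R), (∀ i, v i ∈ N) ∧ x = (Matrix.of v).det }
end Defs

section Defs2
variable (R : Type*) [CommRing R]

/-- `DepthGE A n` : the local ring `A` has depth at least `n`, i.e. there is a regular
sequence of length `n` contained in the maximal ideal. -/
def DepthGE (A : Type*) [CommRing A] [IsLocalRing A] (n : ℕ) : Prop :=
  ∃ rs : List A, rs.length = n ∧ (∀ r ∈ rs, r ∈ IsLocalRing.maximalIdeal A) ∧
    RingTheory.Sequence.IsRegular A rs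

/-- The height of a prime ideal. -/
noncomputable def primeHt (𝔯 : Ideal R) (h : 𝔯.IsPrime) : ℕ∞ :=
  Order.height (⟨𝔯, h⟩ : PrimeSpectrum R)

/-- Condition (G₀): the localization of `R` at every prime of height `0` is Gorenstein
(for a zero-dimensional local ring, Gorenstein means self-injective). -/
def CondG0 : Prop :=
  ∀ (𝔯 : Ideal R) (h : 𝔯.IsPrime), primeHt R 𝔯 h ≤ 0 →
    Module.Injective (Localization.AtPrime 𝔯) (Localization.AtPrime 𝔯)

/-- Serre's condition (Sₙ): `depth R_𝔯 ≥ min {n, ht 𝔯}` for every prime `𝔯`. -/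
def CondS (n : ℕ) : Prop :=
  ∀ (𝔯 : Ideal R) (h : 𝔯.IsPrime) (m : ℕ),
    (m : ℕ∞) ≤ min (n : ℕ∞) (primeHt R 𝔯 h) → DepthGE (Localization.AtPrime 𝔯) m

/-- The canonical map `I** → R** = R` for an ideal `I ⊆ R`. -/
noncomputable def bidualToRing (I : Ideal R) :
    Module.Dual R (Module.Dual R I) →ₗ[R] R where
  toFun φ := φ ((Submodule.subtype I).dualMap (LinearMap.id : R →ₗ[R] R))
  map_add' := by intros; rfl
  map_smul' := by intros; rfl
end Defs2

/-!
Since `r ^ m` is again `M`-regular, it suffices to show that `r * z ∈ (L)` forces `z ∈ (L)`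
for every `M`-regular `r`. Otherwise `r` lies in an associated prime `P = (L) : y` of `R/(L)`.
If `ht P ≥ 2`, then (S₂) gives `depth R_P ≥ 2`, which is impossible because the maximal ideal
of `R_P` kills `y` modulo the regular element `L`. If `ht P ≤ 1`, the primes strictly below `P`
are minimal and so miss the regular element of `Ann M`; if `Ann M ⊆ P`, then `P` would be minimal
over `Ann M` and could not contain the `M`-regular element `r`. Hence some `v ∈ Ann M` lies
outside `P`. But `v ^ s` is the determinant of `v • 1`, whose columns lie in the kernel of the
presentation, so `v ^ s ∈ char(M) = (L) ⊆ P`, a contradiction.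
-/

section

open IsLocalRing

variable {R : Type*} [CommRing R]

lemma det_mem_charIdealAux {s : ℕ} {N : Submodule R (Fin s → R)} {v : Fin s → Fin s → R}
    (hv : ∀ j, v j ∈ N) : (Matrix.of v).det ∈ charIdealAux R s N := by
  let g : Module.Dual R N →ₗ[R] (Fin s → R) :=
    LinearMap.pi fun j => LinearMap.applyₗ (⟨v j, hv j⟩ : N)
  refine ⟨Matrix.detRowAlternating.compLinearMap g, ?_⟩
  change (Matrix.of v).transpose.det = _
  exact Matrix.det_transpose _

lemma fittIdealAux_le_charIdealAux (s : ℕ) (N : Submodule R (Fin s → R)) :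
    fittIdealAux R s N ≤ charIdealAux R s N :=
  Ideal.span_le.mpr fun _ ⟨_, hv, hx⟩ => hx ▸ det_mem_charIdealAux hv

lemma pow_mem_charIdealAux {s : ℕ} {N : Submodule R (Fin s → R)} {v : R}
    (hv : ∀ y, v • y ∈ N) : v ^ s ∈ charIdealAux R s N := by
  refine fittIdealAux_le_charIdealAux s N (Ideal.subset_span ⟨fun j => v • Pi.single j 1,
    fun j => hv _, ?_⟩)
  have : Matrix.of (fun j => v • (Pi.single j 1 : Fin s → R)) = v • 1 := by
    ext i j
    by_cases h : i = j <;> simp [h, eq_comm]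
  rw [this, Matrix.det_smul, Matrix.det_one, mul_one, Fintype.card_fin]

lemma annihilator_le_radical_charIdealAux {M : Type*} [AddCommGroup M] [Module R M] {s : ℕ}
    (π : (Fin s → R) →ₗ[R] M) :
    Module.annihilator R M ≤ (charIdealAux R s (LinearMap.ker π)).radical := fun v hv =>
  ⟨s, pow_mem_charIdealAux fun y => by
    rw [LinearMap.mem_ker, map_smul, Module.mem_annihilator.mp hv]⟩

lemma DepthGE.mem_span_singleton_of_forall_mul_mem {A : Type*} [CommRing A] [IsLocalRing A]
    (hd : DepthGE A 2) {L x : A} (hL : L ∈ nonZeroDivisors A)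
    (hx : ∀ t ∈ maximalIdeal A, t * x ∈ Ideal.span {L}) : x ∈ Ideal.span {L} := by
  obtain ⟨rs, hlen, hmem, hseq⟩ := hd
  obtain ⟨α, β, rfl⟩ := List.length_eq_two.mp hlen
  obtain ⟨hα, hβ⟩ : IsSMulRegular A α ∧ IsSMulRegular (QuotSMulTop α A) β := by
    simpa using hseq.toIsWeaklyRegular
  obtain ⟨x₁, hx₁⟩ := Ideal.mem_span_singleton'.mp (hx α (hmem α (by simp)))
  obtain ⟨w, hw⟩ := Ideal.mem_span_singleton'.mp (hx β (hmem β (by simp)))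
  have hβx₁ : β • x₁ = α • w := (mul_cancel_left_mem_nonZeroDivisors hL).mp <| by
    simp only [smul_eq_mul]
    linear_combination β * hx₁ - α * hw
  obtain ⟨y, -, rfl⟩ := (Submodule.mem_smul_pointwise_iff_exists _ _ _).mp <|
    (isSMulRegular_quotient_iff_mem_of_smul_mem _ _).mp hβ x₁ <|
      hβx₁ ▸ Submodule.smul_mem_pointwise_smul _ _ _ trivial
  refine Ideal.mem_span_singleton'.mpr ⟨y, hα ?_⟩
  simp only [smul_eq_mul] at hx₁ ⊢
  linear_combination hx₁

lemma primeHt_eq_height (P : Ideal R) (hP : P.IsPrime) : primeHt R P hP = P.height :=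
  (PrimeSpectrum.height_eq_orderHeight ⟨P, hP⟩).symm

lemma Ideal.exists_isPrime_colon_singleton_ge [IsNoetherianRing R] {J : Ideal R} {z : R}
    (hz : z ∉ J) : ∃ P : Ideal R, P.IsPrime ∧ J.colon {z} ≤ P ∧ ∃ y, P = J.colon {y} := by
  have hcolon (y : R) :
      (⊥ : Submodule R (R ⧸ J)).colon {Ideal.Quotient.mk J y} = J.colon {y} := by
    ext t
    simp [Submodule.mem_colon_singleton, Algebra.smul_def, ← map_mul,
      Ideal.Quotient.eq_zero_iff_mem]
  obtain ⟨P, hP, hle⟩ := exists_le_isAssociatedPrime_of_isNoetherianRing R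
    (Ideal.Quotient.mk J z) (by rwa [ne_eq, Ideal.Quotient.eq_zero_iff_mem])
  obtain ⟨hPprime, y, rfl⟩ := isAssociatedPrime_iff.mp hP
  obtain ⟨y, rfl⟩ := Ideal.Quotient.mk_surjective y
  exact ⟨_, hPprime, hcolon z ▸ hle, y, hcolon y⟩

lemma height_le_one_of_eq_colon (hS : CondS R 2) {L : R} (hL : L ∈ nonZeroDivisors R)
    {P : Ideal R} [hP : P.IsPrime] {y : R} (hPy : P = (Ideal.span {L}).colon {y}) :
    P.height ≤ 1 := by
  by_contra! hht
  let A := Localization.AtPrime P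
  have hd : DepthGE A 2 := hS P hP 2 <| le_min le_rfl <| by
    rw [primeHt_eq_height]
    exact Order.add_one_le_of_lt hht
  have hyP : Ideal.span {y} * P ≤ Ideal.span {L} := by
    rw [Ideal.span_singleton_mul_le_iff, hPy]
    intro t ht
    simpa [mul_comm] using Submodule.mem_colon_singleton.mp ht
  have hy : algebraMap R A y ∈ Ideal.span {algebraMap R A L} := by
    refine hd.mem_span_singleton_of_forall_mul_mem
      (IsLocalization.nonZeroDivisors_le_comap P.primeCompl A hL) fun t ht => ?_
    have := Ideal.map_mono (f := algebraMap R A) hyP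
    rw [Ideal.map_mul, Localization.AtPrime.map_eq_maximalIdeal, Ideal.map_span, Ideal.map_span,
      Set.image_singleton, Set.image_singleton, Ideal.span_singleton_mul_le_iff] at this
    simpa only [mul_comm] using this t ht
  rw [← Set.image_singleton, ← Ideal.map_span,
    IsLocalization.algebraMap_mem_map_algebraMap_iff P.primeCompl] at hy
  obtain ⟨u, hu, huy⟩ := hy
  exact hu (hPy ▸ Submodule.mem_colon_singleton.mpr huy)

lemma annihilator_not_le_of_height_le_one {M : Type*} [AddCommGroup M] [Module R M] {a r : R}
    (ha : a ∈ nonZeroDivisors R) (haM : a ∈ Module.annihilator R M) (hr : IsSMulRegular M r)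
    {P : Ideal R} [P.IsPrime] (hP : P.height ≤ 1) (hrP : r ∈ P) :
    ¬ Module.annihilator R M ≤ P := by
  intro hle
  refine hr.notMem_of_mem_minimalPrimes ⟨⟨‹_›, hle⟩, fun q ⟨hq, hAq⟩ hqP => ?_⟩ hrP
  by_contra hPq
  have hqmin : q ∈ minimalPrimes R := Ideal.height_eq_zero_iff.mp <|
    Order.lt_one_iff.mp (Ideal.height_le_iff.mp hP q hq (lt_of_le_not_ge hqP hPq))
  exact notMem_nonZeroDivisors_of_mem_mem_minimalPrimes (hAq haM) hqmin ha

lemma mem_span_singleton_of_mul_mem [IsNoetherianRing R] (hS : CondS R 2)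
    {M : Type*} [AddCommGroup M] [Module R M] {a r L z : R} (ha : a ∈ nonZeroDivisors R)
    (haM : a ∈ Module.annihilator R M) (hr : IsSMulRegular M r) (hL : L ∈ nonZeroDivisors R)
    (hM : Module.annihilator R M ≤ (Ideal.span {L}).radical) (hz : r * z ∈ Ideal.span {L}) :
    z ∈ Ideal.span {L} := by
  by_contra hz'
  obtain ⟨P, hP, hle, y, hPy⟩ := Ideal.exists_isPrime_colon_singleton_ge hz'
  have hrP : r ∈ P := hle (Submodule.mem_colon_singleton.mpr hz)
  have hLP : Ideal.span {L} ≤ P := hPy ▸ Ideal.le_colon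
  obtain ⟨v, hvM, hvP⟩ := SetLike.not_le_iff_exists.mp <| annihilator_not_le_of_height_le_one
    ha haM hr (height_le_one_of_eq_colon hS hL hPy) hrP
  exact hvP (hP.radical_le_iff.mpr hLP (hM hvM))

end

theorem char_saturated_general (R : Type*) [CommRing R] [IsNoetherianRing R]
    (hS : CondS R 2)
    (M : Type*) [AddCommGroup M] [Module R M]
    (htors : ∃ a ∈ nonZeroDivisors R, ∀ x : M, a • x = 0)
    (r : R)
    (hreg : Function.Injective (fun m : M => r • m))
    (s : ℕ) (π : (Fin s → R) →ₗ[R] M)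
    (L : R) (hL : L ∈ nonZeroDivisors R)
    (hchar : charIdealAux R s (LinearMap.ker π) = Ideal.span {L})
    (x : R) (m : ℕ)
    (hx : r ^ m * x ∈ charIdealAux R s (LinearMap.ker π)) :
    x ∈ charIdealAux R s (LinearMap.ker π) := by
  obtain ⟨a, ha, haM⟩ := htors
  rw [hchar] at hx ⊢
  exact mem_span_singleton_of_mul_mem hS ha (Module.mem_annihilator.mpr haM)
    (IsSMulRegular.pow m hreg) hL (hchar ▸ annihilator_le_radical_charIdealAux π) hx

/-- If a noetherian ring satisfies (G₀) and (S₂), `M` is a finitely generated torsion module,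
`r` is a regular element that is `M`-regular, and `char_R(M) = L·R` is principal generated by
a regular element `L`, then `char_R(M)` is saturated with respect to powers of `r`:
`r^m·x ∈ char_R(M)` implies `x ∈ char_R(M)`. -/
theorem char_saturated (R : Type*) [CommRing R] [IsNoetherianRing R]
    (hG : CondG0 R) (hS : CondS R 2)
    (M : Type*) [AddCommGroup M] [Module R M] [Module.Finite R M]
    (htors : ∃ a ∈ nonZeroDivisors R, ∀ x : M, a • x = 0)
    (r : R) (hr : r ∈ nonZeroDivisors R)
    (hreg : Function.Injective (fun m : M => r • m))
    (s : ℕ) (hs : 0 < s) (π : (Fin s → R) →ₗ[R] M) (hπ : Function.Surjective π)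
    (L : R) (hL : L ∈ nonZeroDivisors R)
    (hchar : charIdealAux R s (LinearMap.ker π) = Ideal.span {L})
    (x : R) (m : ℕ) (hm : 1 ≤ m)
    (hx : r ^ m * x ∈ charIdealAux R s (LinearMap.ker π)) :
    x ∈ charIdealAux R s (LinearMap.ker π) :=
  char_saturated_general R hS M htors r hreg s π L hL hchar x m hx
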